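/- arXiv:2410.17639 — 2 statements merged into one kernel-verified Lean document; each statement's English description precedes it below -/
import Mathlib

section
/- For a box B(P,q,l) = {x ∈ ℝ^n : -l ≤ P(x - q) ≤ l} with P invertible and l ≥ 0 (componentwise), the implication (x ∈ B(P,q,l) ⟹ cᵀx ≤ b) holds if and only if cᵀP⁻¹(sign(P⁻ᵀc) ∘ l) ≤ b - cᵀq, where sign is taken componentwise and ∘ is the Hadamard (elementwise) product. -/
open Matrix BigOperators

theorem stmt_1 {n : ℕ} (P : Matrix (Fin n) (Fin n) ℝ) (q l c : Fin n → ℝ) (b : ℝ)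
    (hP : IsUnit P.det) (hl : ∀ i, 0 ≤ l i) :
    (∀ x : Fin n → ℝ, (∀ i, -l i ≤ (P *ᵥ (x - q)) i ∧ (P *ᵥ (x - q)) i ≤ l i) →
      c ⬝ᵥ x ≤ b)
    ↔ c ⬝ᵥ (P⁻¹ *ᵥ (fun i => Real.sign (((Pᵀ)⁻¹ *ᵥ c) i) * l i)) ≤ b - c ⬝ᵥ q := by
  set d : Fin n → ℝ := (Pᵀ)⁻¹ *ᵥ c with hd
  have habs : ∀ t : ℝ, t * Real.sign t = |t| := by
    intro t
    rcases lt_trichotomy t 0 with h|h|h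
    · rw [Real.sign_of_neg h, abs_of_neg h]; ring
    · simp [h]
    · rw [Real.sign_of_pos h, abs_of_pos h]; ring
  have hsign : ∀ t : ℝ, |Real.sign t| ≤ 1 := by
    intro t
    rcases lt_trichotomy t 0 with h|h|h
    · rw [Real.sign_of_neg h]; norm_num
    · simp [h]
    · rw [Real.sign_of_pos h]; norm_num
  have hcd : ∀ v : Fin n → ℝ, c ⬝ᵥ (P⁻¹ *ᵥ v) = d ⬝ᵥ v := by
    intro v
    rw [Matrix.dotProduct_mulVec, hd, ← Matrix.transpose_nonsing_inv,
      Matrix.mulVec_transpose]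
  set v : Fin n → ℝ := fun i => Real.sign (d i) * l i with hv
  have hval : d ⬝ᵥ v = ∑ i, |d i| * l i := by
    unfold dotProduct
    refine Finset.sum_congr rfl fun i _ => ?_
    show d i * (Real.sign (d i) * l i) = |d i| * l i
    rw [← habs (d i)]; ring
  have hbound : ∀ y : Fin n → ℝ, (∀ i, -l i ≤ y i ∧ y i ≤ l i) →
      d ⬝ᵥ y ≤ ∑ i, |d i| * l i := by
    intro y hy
    refine Finset.sum_le_sum fun i _ => ?_
    have h1 : |y i| ≤ l i := abs_le.mpr (hy i)
    calc d i * y i ≤ |d i * y i| := le_abs_self _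
      _ = |d i| * |y i| := abs_mul _ _
      _ ≤ |d i| * l i := by
          exact mul_le_mul_of_nonneg_left h1 (abs_nonneg _)
  constructor
  · intro h
    have hx0 := h (q + P⁻¹ *ᵥ v) ?_
    · have : c ⬝ᵥ (q + P⁻¹ *ᵥ v) = c ⬝ᵥ q + c ⬝ᵥ (P⁻¹ *ᵥ v) := by
        rw [dotProduct_add]
      linarith [hx0, this.symm.le]
    · intro i
      have heq : P *ᵥ (q + P⁻¹ *ᵥ v - q) = v := by
        have : q + P⁻¹ *ᵥ v - q = P⁻¹ *ᵥ v := by abel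
        rw [this, Matrix.mulVec_mulVec, Matrix.mul_nonsing_inv P hP,
          Matrix.one_mulVec]
      rw [heq]
      have h2 : |v i| ≤ l i := by
        rw [hv]
        calc |Real.sign (d i) * l i| = |Real.sign (d i)| * |l i| := abs_mul _ _
          _ ≤ 1 * l i := by
              have := abs_of_nonneg (hl i)
              rw [this]
              exact mul_le_mul_of_nonneg_right (hsign _) (hl i)
          _ = l i := one_mul _
      exact abs_le.mp h2
  · intro h x hx
    have hxq : x - q = P⁻¹ *ᵥ (P *ᵥ (x - q)) := by
      rw [Matrix.mulVec_mulVec, Matrix.nonsing_inv_mul P hP, Matrix.one_mulVec]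
    have h1 : c ⬝ᵥ x - c ⬝ᵥ q = d ⬝ᵥ (P *ᵥ (x - q)) := by
      rw [← dotProduct_sub, ← hcd, ← hxq]
    have h2 := hbound (P *ᵥ (x - q)) hx
    rw [hcd, hval] at h
    linarith
end

section
/- Consider the MPC feasible input sets U_f,N(x) for the system x⁺ = Ax + Bu with constraints X, U and terminal set X_T positively invariant under auxiliary law u = Kx with KX_T ⊆ U and (A+BK)X_T ⊆ X_T ⊆ X. If x ∈ X_f (feasible set) with optimizer (u*_0,…,u*_{N−1}) and resulting next state x⁺ = Ax + Bu*_0, then the shifted sequence (u*_1,…,u*_{N−1}, K x*_N) is feasible for x⁺, i.e., x⁺ ∈ X_f (recursive feasibility). -/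
open Matrix BigOperators

/-- Predicted state after `k` steps from `x` under input sequence `u`. -/
def pred {n m : ℕ} (A : Matrix (Fin n) (Fin n) ℝ) (B : Matrix (Fin n) (Fin m) ℝ)
    (x : Fin n → ℝ) (u : ℕ → (Fin m → ℝ)) : ℕ → (Fin n → ℝ)
  | 0 => x
  | k + 1 => A *ᵥ pred A B x u k + B *ᵥ u k

/-!
Recursive feasibility by the shifted sequence: from the successor state `A x + B u₀`, the inputs
`u₁, …, u_{N-1}` reproduce the optimal trajectory one step ahead, so all of its constraints carry
over, and the state reached after them is the optimal terminal state `x_N ∈ XT`. The appended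
input `K x_N` lies in `U`, and the last step applies the closed loop `A + B K`, under which `XT`
is invariant.
-/

section Prediction

variable {n m : ℕ} (A : Matrix (Fin n) (Fin n) ℝ) (B : Matrix (Fin n) (Fin m) ℝ)

theorem pred_succ (x : Fin n → ℝ) (u : ℕ → (Fin m → ℝ)) (k : ℕ) :
    pred A B x u (k + 1) = A *ᵥ pred A B x u k + B *ᵥ u k :=
  rfl

theorem pred_shift {x : Fin n → ℝ} {u v : ℕ → (Fin m → ℝ)} {i : ℕ}
    (hv : ∀ j < i, v j = u (j + 1)) :
    pred A B (A *ᵥ x + B *ᵥ u 0) v i = pred A B x u (i + 1) := by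
  induction i with
  | zero => rfl
  | succ k ih =>
    rw [pred_succ, ih fun j hj => hv j (by omega), hv k k.lt_succ_self, ← pred_succ]

theorem pred_succ_of_feedback (K : Matrix (Fin m) (Fin n) ℝ) {x : Fin n → ℝ}
    {v : ℕ → (Fin m → ℝ)} {k : ℕ} (hv : v k = K *ᵥ pred A B x v k) :
    pred A B x v (k + 1) = (A + B * K) *ᵥ pred A B x v k := by
  rw [pred_succ, hv, add_mulVec, mulVec_mulVec]

end Prediction

theorem stmt_17 {n m : ℕ} (A : Matrix (Fin n) (Fin n) ℝ) (B : Matrix (Fin n) (Fin m) ℝ)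
    (K : Matrix (Fin m) (Fin n) ℝ)
    (X XT : Set (Fin n → ℝ)) (U : Set (Fin m → ℝ)) (N : ℕ) (hN : 1 ≤ N)
    (hXTX : XT ⊆ X)
    (hK : ∀ z ∈ XT, K *ᵥ z ∈ U)
    (hinv : ∀ z ∈ XT, (A + B * K) *ᵥ z ∈ XT)
    (x : Fin n → ℝ) (u : ℕ → (Fin m → ℝ))
    (hu : ∀ i < N, u i ∈ U)
    (hx : ∀ i, 1 ≤ i → i < N → pred A B x u i ∈ X)
    (hT : pred A B x u N ∈ XT) :
    -- the shifted sequence, appended with the auxiliary law u = Kx applied to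
    -- the optimal terminal state, is feasible for the successor state
    (∀ i < N,
        (fun j => if j = N - 1 then K *ᵥ pred A B x u N else u (j + 1)) i ∈ U) ∧
    (∀ i, 1 ≤ i → i < N →
        pred A B (A *ᵥ x + B *ᵥ u 0)
          (fun j => if j = N - 1 then K *ᵥ pred A B x u N else u (j + 1)) i ∈ X) ∧
    pred A B (A *ᵥ x + B *ᵥ u 0)
        (fun j => if j = N - 1 then K *ᵥ pred A B x u N else u (j + 1)) N ∈ XT := by
  set v : ℕ → (Fin m → ℝ) :=
    fun j => if j = N - 1 then K *ᵥ pred A B x u N else u (j + 1)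
  have hv_shift : ∀ j < N - 1, v j = u (j + 1) := fun j hj => if_neg hj.ne
  have hv_last : v (N - 1) = K *ᵥ pred A B x u N := if_pos rfl
  have hstate : ∀ i ≤ N - 1, pred A B (A *ᵥ x + B *ᵥ u 0) v i = pred A B x u (i + 1) :=
    fun i hi => pred_shift A B fun j hj => hv_shift j (by omega)
  obtain ⟨k, rfl⟩ : ∃ k, N = k + 1 := ⟨N - 1, by omega⟩
  simp only [Nat.add_sub_cancel] at hv_shift hv_last hstate
  refine ⟨fun i hi => ?_, fun i hi₁ hi => ?_, ?_⟩
  · rcases (show i < k ∨ i = k by omega) with hi | rfl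
    · rw [hv_shift i hi]
      exact hu _ (by omega)
    · rw [hv_last]
      exact hK _ hT
  · rw [hstate i (by omega)]
    rcases (show i + 1 < k + 1 ∨ i = k by omega) with hi | rfl
    · exact hx _ (by omega) hi
    · exact hXTX hT
  · rw [pred_succ_of_feedback A B K (by rw [hv_last, hstate k le_rfl]), hstate k le_rfl]
    exact hinv _ hT
end
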